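/- arXiv:2002.04283 — 5 statements merged into one kernel-verified Lean document; each statement's English description precedes it below -/
import Mathlib

section
/- For real numbers x₁, x₂ ∈ [a₁, b₁] and y₁, y₂ ∈ [a₂, b₂] with a₁ ≤ b₁ and a₂ ≤ b₂, the inequality x₁y₁ - x₁y₂ + x₂y₁ + x₂y₂ - (a₂+b₂)x₂ - (a₁+b₁)y₁ + a₁b₂ + b₁a₂ ≤ 0 holds. -/
/-!
The left-hand side is affine in `x₁`, so it is at most its value at `x₁ = a₁` or at
`x₁ = b₁`. At these endpoints it factors as `(x₂ - b₁) (y₁ - a₂) + (a₁ - x₂) (b₂ - y₂)` and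
`(x₂ - b₁) (y₂ - a₂) + (a₁ - x₂) (b₂ - y₁)` respectively, a sum of two products of a
nonpositive and a nonnegative factor.
-/

lemma mul_le_max_of_mem_Icc {α : Type*} [Ring α] [LinearOrder α]
    [IsStrictOrderedRing α] {a b x : α} (t : α) (hx : x ∈ Set.Icc a b) :
    x * t ≤ max (a * t) (b * t) := by
  rcases le_total 0 t with ht | ht
  · exact le_max_of_le_right (mul_le_mul_of_nonneg_right hx.2 ht)
  · exact le_max_of_le_left (mul_le_mul_of_nonpos_right hx.1 ht)

lemma sub_mul_add_sub_mul_nonpos_of_mem_Icc {α : Type*} [Ring α] [LinearOrder α]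
    [IsStrictOrderedRing α] {a b u p q : α} (hu : u ∈ Set.Icc a b)
    (hp : 0 ≤ p) (hq : 0 ≤ q) :
    (u - b) * p + (a - u) * q ≤ 0 :=
  add_nonpos (mul_nonpos_of_nonpos_of_nonneg (sub_nonpos.2 hu.2) hp)
    (mul_nonpos_of_nonpos_of_nonneg (sub_nonpos.2 hu.1) hq)

theorem generalized_CH_algebraic_general
    (a₁ b₁ a₂ b₂ x₁ x₂ y₁ y₂ : ℝ)
    (hx₁ : x₁ ∈ Set.Icc a₁ b₁) (hx₂ : x₂ ∈ Set.Icc a₁ b₁)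
    (hy₁ : y₁ ∈ Set.Icc a₂ b₂) (hy₂ : y₂ ∈ Set.Icc a₂ b₂) :
    x₁*y₁ - x₁*y₂ + x₂*y₁ + x₂*y₂ - (a₂+b₂)*x₂ - (a₁+b₁)*y₁ + a₁*b₂ + b₁*a₂ ≤ 0 := by
  rcases le_max_iff.1 (mul_le_max_of_mem_Icc (y₁ - y₂) hx₁) with h_lower | h_upper
  · calc _ ≤ (x₂ - b₁) * (y₁ - a₂) + (a₁ - x₂) * (b₂ - y₂) := by linarith
      _ ≤ 0 := sub_mul_add_sub_mul_nonpos_of_mem_Icc hx₂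
        (sub_nonneg.2 hy₁.1) (sub_nonneg.2 hy₂.2)
  · calc _ ≤ (x₂ - b₁) * (y₂ - a₂) + (a₁ - x₂) * (b₂ - y₁) := by linarith
      _ ≤ 0 := sub_mul_add_sub_mul_nonpos_of_mem_Icc hx₂
        (sub_nonneg.2 hy₂.1) (sub_nonneg.2 hy₁.2)

theorem generalized_CH_algebraic
    (a₁ b₁ a₂ b₂ x₁ x₂ y₁ y₂ : ℝ)
    (ha₁ : a₁ ≤ b₁) (ha₂ : a₂ ≤ b₂)
    (hx₁ : x₁ ∈ Set.Icc a₁ b₁) (hx₂ : x₂ ∈ Set.Icc a₁ b₁)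
    (hy₁ : y₁ ∈ Set.Icc a₂ b₂) (hy₂ : y₂ ∈ Set.Icc a₂ b₂) :
    x₁*y₁ - x₁*y₂ + x₂*y₁ + x₂*y₂ - (a₂+b₂)*x₂ - (a₁+b₁)*y₁ + a₁*b₂ + b₁*a₂ ≤ 0 :=
  generalized_CH_algebraic_general a₁ b₁ a₂ b₂ x₁ x₂ y₁ y₂ hx₁ hx₂ hy₁ hy₂
end

section
/- Let (Γ, μ) be a probability measure space (the hidden variable space with distribution ρ(λ)dλ). Suppose p₁, p₁' : Γ → ℝ are measurable with values in [a₁, b₁] and p₂, p₂' : Γ → ℝ are measurable with values in [a₂, b₂], where 0 ≤ a₁ ≤ b₁ ≤ 1 and 0 ≤ a₂ ≤ b₂ ≤ 1. Define joint probabilities P(f,g) = ∫ f·g dμ and marginals P(f) = ∫ f dμ. Then P(p₁,p₂) - P(p₁,p₂') + P(p₁',p₂) + P(p₁',p₂') - (a₂+b₂)·P(p₁') - (a₁+b₁)·P(p₂) + a₁b₂ + b₁a₂ ≤ 0. -/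
/-! Since `μ` is a probability measure, the left-hand side is the integral of the same
combination of the numbers `p₁ ω, p₁' ω, p₂ ω, p₂' ω`, so it suffices that this combination is
nonpositive pointwise: the Clauser–Horne inequality for numbers in two intervals. -/

open MeasureTheory

lemma clauserHorne_combination_nonpos {a₁ b₁ a₂ b₂ x y u v : ℝ}
    (hx : x ∈ Set.Icc a₁ b₁) (hy : y ∈ Set.Icc a₁ b₁)
    (hu : u ∈ Set.Icc a₂ b₂) (hv : v ∈ Set.Icc a₂ b₂) :
    x * u - x * v + y * u + y * v - (a₂ + b₂) * y - (a₁ + b₁) * u + a₁ * b₂ + b₁ * a₂ ≤ 0 := by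
  obtain ⟨hx₁, hx₂⟩ := hx
  obtain ⟨hy₁, hy₂⟩ := hy
  obtain ⟨hu₁, hu₂⟩ := hu
  obtain ⟨hv₁, hv₂⟩ := hv
  have hab₁ : 0 ≤ b₁ - a₁ := by linarith
  -- The combination is affine in `x` with slope `u - v` and in `y` with slope `u + v - (a₂ + b₂)`,
  -- so the signs of these slopes tell which endpoints of `[a₁, b₁]` are extremal.
  rcases le_total u v with huv | huv <;> rcases le_total (u + v) (a₂ + b₂) with hs | hs
  · nlinarith [mul_nonneg (sub_nonneg.2 huv) (sub_nonneg.2 hx₁),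
      mul_nonneg (sub_nonneg.2 hs) (sub_nonneg.2 hy₁), mul_nonneg hab₁ (sub_nonneg.2 hu₁)]
  · nlinarith [mul_nonneg (sub_nonneg.2 huv) (sub_nonneg.2 hx₁),
      mul_nonneg (sub_nonneg.2 hs) (sub_nonneg.2 hy₂), mul_nonneg hab₁ (sub_nonneg.2 hv₂)]
  · nlinarith [mul_nonneg (sub_nonneg.2 huv) (sub_nonneg.2 hx₂),
      mul_nonneg (sub_nonneg.2 hs) (sub_nonneg.2 hy₁), mul_nonneg hab₁ (sub_nonneg.2 hv₁)]
  · nlinarith [mul_nonneg (sub_nonneg.2 huv) (sub_nonneg.2 hx₂),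
      mul_nonneg (sub_nonneg.2 hs) (sub_nonneg.2 hy₂), mul_nonneg hab₁ (sub_nonneg.2 hu₂)]

lemma integrable_mul_of_mem_Icc {Γ : Type*} [MeasurableSpace Γ] {μ : Measure Γ} [IsFiniteMeasure μ]
    {f g : Γ → ℝ} {a b c d : ℝ} (hf : Measurable f) (hg : Measurable g)
    (hfab : ∀ ω, f ω ∈ Set.Icc a b) (hgcd : ∀ ω, g ω ∈ Set.Icc c d) :
    Integrable (fun ω ↦ f ω * g ω) μ :=
  (Integrable.of_mem_Icc c d hg.aemeasurable (.of_forall hgcd)).bdd_mul hf.aestronglyMeasurable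
    (.of_forall fun ω ↦ abs_le_max_abs_abs (hfab ω).1 (hfab ω).2)

theorem generalized_CH_hidden_variable_general
    {Γ : Type*} [MeasurableSpace Γ] (μ : Measure Γ) [IsProbabilityMeasure μ]
    (a₁ b₁ a₂ b₂ : ℝ)
    (p₁ p₁' p₂ p₂' : Γ → ℝ)
    (hm₁ : Measurable p₁) (hm₁' : Measurable p₁')
    (hm₂ : Measurable p₂) (hm₂' : Measurable p₂')
    (hp₁ : ∀ ω, p₁ ω ∈ Set.Icc a₁ b₁) (hp₁' : ∀ ω, p₁' ω ∈ Set.Icc a₁ b₁)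
    (hp₂ : ∀ ω, p₂ ω ∈ Set.Icc a₂ b₂) (hp₂' : ∀ ω, p₂' ω ∈ Set.Icc a₂ b₂) :
    (∫ ω, p₁ ω * p₂ ω ∂μ) - (∫ ω, p₁ ω * p₂' ω ∂μ)
      + (∫ ω, p₁' ω * p₂ ω ∂μ) + (∫ ω, p₁' ω * p₂' ω ∂μ)
      - (a₂ + b₂) * (∫ ω, p₁' ω ∂μ) - (a₁ + b₁) * (∫ ω, p₂ ω ∂μ)
      + a₁*b₂ + b₁*a₂ ≤ 0 := by
  have i₁' := Integrable.of_mem_Icc a₁ b₁ hm₁'.aemeasurable (μ := μ) (.of_forall hp₁')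
  have i₂ := Integrable.of_mem_Icc a₂ b₂ hm₂.aemeasurable (μ := μ) (.of_forall hp₂)
  have i₁₂ := integrable_mul_of_mem_Icc (μ := μ) hm₁ hm₂ hp₁ hp₂
  have i₁₂' := integrable_mul_of_mem_Icc (μ := μ) hm₁ hm₂' hp₁ hp₂'
  have i₁'₂ := integrable_mul_of_mem_Icc (μ := μ) hm₁' hm₂ hp₁' hp₂
  have i₁'₂' := integrable_mul_of_mem_Icc (μ := μ) hm₁' hm₂' hp₁' hp₂'
  calc _ = ∫ ω, (p₁ ω * p₂ ω - p₁ ω * p₂' ω + p₁' ω * p₂ ω + p₁' ω * p₂' ω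
          - (a₂ + b₂) * p₁' ω - (a₁ + b₁) * p₂ ω + a₁ * b₂ + b₁ * a₂) ∂μ := by
        rw [integral_add, integral_add, integral_sub, integral_sub, integral_add, integral_add,
          integral_sub, integral_const_mul, integral_const_mul, integral_const, integral_const]
        · simp
        all_goals fun_prop
    _ ≤ 0 := integral_nonpos fun ω ↦
        clauserHorne_combination_nonpos (hp₁ ω) (hp₁' ω) (hp₂ ω) (hp₂' ω)

theorem generalized_CH_hidden_variable
    {Γ : Type*} [MeasurableSpace Γ] (μ : Measure Γ) [IsProbabilityMeasure μ]
    (a₁ b₁ a₂ b₂ : ℝ) (ha₁ : 0 ≤ a₁) (hab₁ : a₁ ≤ b₁) (hb₁ : b₁ ≤ 1)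
    (ha₂ : 0 ≤ a₂) (hab₂ : a₂ ≤ b₂) (hb₂ : b₂ ≤ 1)
    (p₁ p₁' p₂ p₂' : Γ → ℝ)
    (hm₁ : Measurable p₁) (hm₁' : Measurable p₁')
    (hm₂ : Measurable p₂) (hm₂' : Measurable p₂')
    (hp₁ : ∀ ω, p₁ ω ∈ Set.Icc a₁ b₁) (hp₁' : ∀ ω, p₁' ω ∈ Set.Icc a₁ b₁)
    (hp₂ : ∀ ω, p₂ ω ∈ Set.Icc a₂ b₂) (hp₂' : ∀ ω, p₂' ω ∈ Set.Icc a₂ b₂) :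
    (∫ ω, p₁ ω * p₂ ω ∂μ) - (∫ ω, p₁ ω * p₂' ω ∂μ)
      + (∫ ω, p₁' ω * p₂ ω ∂μ) + (∫ ω, p₁' ω * p₂' ω ∂μ)
      - (a₂ + b₂) * (∫ ω, p₁' ω ∂μ) - (a₁ + b₁) * (∫ ω, p₂ ω ∂μ)
      + a₁*b₂ + b₁*a₂ ≤ 0 :=
  generalized_CH_hidden_variable_general μ a₁ b₁ a₂ b₂ p₁ p₁' p₂ p₂' hm₁ hm₁' hm₂ hm₂' hp₁ hp₁' hp₂
    hp₂'
end

section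
/- Let (Γ, μ) be a probability measure space, α ∈ [0,1], and let p₁, p₁', p₂, p₂' : Γ → ℝ be measurable functions with values in [(1-α)/2, (1+α)/2]. With P(f,g) = ∫ f·g dμ and P(f) = ∫ f dμ, one has P(p₁,p₂) - P(p₁,p₂') + P(p₁',p₂) + P(p₁',p₂') - P(p₁') - P(p₂) + (1-α²)/2 ≤ 0. -/
open MeasureTheory Set

/-! For fixed x₂, x₂' the Clauser–Horne combination is affine in x₁ and in x₁', with slopes
x₂ - x₂' and x₂ + x₂' - a₂ - b₂. Replacing each of x₁, x₁' by the endpoint of [a₁, b₁] that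
the sign of its slope selects bounds it by (b₁ - a₁) times a nonpositive factor
(x₂ - b₂, a₂ - x₂', x₂' - b₂ or a₂ - x₂). Integrating this pointwise bound gives the inequality;
the hyperon case is a₁ = a₂ = (1-α)/2, b₁ = b₂ = (1+α)/2. -/

theorem clauser_horne_pointwise {a₁ b₁ a₂ b₂ x₁ x₁' x₂ x₂' : ℝ}
    (hx₁ : x₁ ∈ Icc a₁ b₁) (hx₁' : x₁' ∈ Icc a₁ b₁) (hx₂ : x₂ ∈ Icc a₂ b₂) (hx₂' : x₂' ∈ Icc a₂ b₂) :
    x₁ * x₂ - x₁ * x₂' + x₁' * x₂ + x₁' * x₂' - (a₂ + b₂) * x₁' - (a₁ + b₁) * x₂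
      + (a₁ * b₂ + b₁ * a₂) ≤ 0 := by
  obtain ⟨h₁, h₁b⟩ := hx₁
  obtain ⟨h₁', h₁b'⟩ := hx₁'
  obtain ⟨h₂, h₂b⟩ := hx₂
  obtain ⟨h₂', h₂b'⟩ := hx₂'
  have hab : 0 ≤ b₁ - a₁ := by linarith
  rcases le_total x₂' x₂ with h | h <;> rcases le_total (a₂ + b₂) (x₂ + x₂') with h' | h'
  · linarith [mul_nonneg (sub_nonneg.2 h₁b) (sub_nonneg.2 h),
      mul_nonneg (sub_nonneg.2 h₁b') (sub_nonneg.2 h'), mul_nonneg hab (sub_nonneg.2 h₂b)]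
  · linarith [mul_nonneg (sub_nonneg.2 h₁b) (sub_nonneg.2 h),
      mul_nonneg (sub_nonneg.2 h₁') (sub_nonneg.2 h'), mul_nonneg hab (sub_nonneg.2 h₂')]
  · linarith [mul_nonneg (sub_nonneg.2 h₁) (sub_nonneg.2 h),
      mul_nonneg (sub_nonneg.2 h₁b') (sub_nonneg.2 h'), mul_nonneg hab (sub_nonneg.2 h₂b')]
  · linarith [mul_nonneg (sub_nonneg.2 h₁) (sub_nonneg.2 h),
      mul_nonneg (sub_nonneg.2 h₁') (sub_nonneg.2 h'), mul_nonneg hab (sub_nonneg.2 h₂)]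

section
variable {Γ : Type*} [MeasurableSpace Γ] {μ : Measure Γ}

theorem MeasureTheory.Integrable.mul_of_mem_Icc [IsFiniteMeasure μ] {f g : Γ → ℝ} {a b c d : ℝ}
    (hf : AEMeasurable f μ) (hg : AEMeasurable g μ)
    (hfI : ∀ᵐ ω ∂μ, f ω ∈ Icc a b) (hgI : ∀ᵐ ω ∂μ, g ω ∈ Icc c d) :
    Integrable (fun ω => f ω * g ω) μ :=
  (Integrable.of_mem_Icc c d hg hgI).bdd_mul hf.aestronglyMeasurable
    (hfI.mono fun _ h => abs_le_max_abs_abs h.1 h.2)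

theorem clauser_horne_integral [IsProbabilityMeasure μ] {a₁ b₁ a₂ b₂ : ℝ} {f₁ f₁' f₂ f₂' : Γ → ℝ}
    (hm₁ : AEMeasurable f₁ μ) (hm₁' : AEMeasurable f₁' μ)
    (hm₂ : AEMeasurable f₂ μ) (hm₂' : AEMeasurable f₂' μ)
    (hf₁ : ∀ᵐ ω ∂μ, f₁ ω ∈ Icc a₁ b₁) (hf₁' : ∀ᵐ ω ∂μ, f₁' ω ∈ Icc a₁ b₁)
    (hf₂ : ∀ᵐ ω ∂μ, f₂ ω ∈ Icc a₂ b₂) (hf₂' : ∀ᵐ ω ∂μ, f₂' ω ∈ Icc a₂ b₂) :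
    (∫ ω, f₁ ω * f₂ ω ∂μ) - (∫ ω, f₁ ω * f₂' ω ∂μ) + (∫ ω, f₁' ω * f₂ ω ∂μ)
      + (∫ ω, f₁' ω * f₂' ω ∂μ) - (a₂ + b₂) * (∫ ω, f₁' ω ∂μ) - (a₁ + b₁) * (∫ ω, f₂ ω ∂μ)
      + (a₁ * b₂ + b₁ * a₂) ≤ 0 := by
  have := Integrable.of_mem_Icc _ _ hm₁' hf₁'
  have := Integrable.of_mem_Icc _ _ hm₂ hf₂
  have := Integrable.mul_of_mem_Icc hm₁ hm₂ hf₁ hf₂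
  have := Integrable.mul_of_mem_Icc hm₁ hm₂' hf₁ hf₂'
  have := Integrable.mul_of_mem_Icc hm₁' hm₂ hf₁' hf₂
  have := Integrable.mul_of_mem_Icc hm₁' hm₂' hf₁' hf₂'
  have hle := integral_nonpos_of_ae (μ := μ) <| by
    filter_upwards [hf₁, hf₁', hf₂, hf₂'] with ω h₁ h₁' h₂ h₂'
    exact clauser_horne_pointwise h₁ h₁' h₂ h₂'
  rw [integral_add, integral_sub, integral_sub, integral_add, integral_add, integral_sub,
    integral_const_mul, integral_const_mul, integral_const] at hle
  · simpa using hle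
  all_goals fun_prop

end

theorem generalized_CH_hyperon_general
    {Γ : Type*} [MeasurableSpace Γ] (μ : Measure Γ) [IsProbabilityMeasure μ]
    (α : ℝ)
    (p₁ p₁' p₂ p₂' : Γ → ℝ)
    (hm₁ : Measurable p₁) (hm₁' : Measurable p₁')
    (hm₂ : Measurable p₂) (hm₂' : Measurable p₂')
    (hp₁ : ∀ ω, p₁ ω ∈ Set.Icc ((1-α)/2) ((1+α)/2))
    (hp₁' : ∀ ω, p₁' ω ∈ Set.Icc ((1-α)/2) ((1+α)/2))
    (hp₂ : ∀ ω, p₂ ω ∈ Set.Icc ((1-α)/2) ((1+α)/2))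
    (hp₂' : ∀ ω, p₂' ω ∈ Set.Icc ((1-α)/2) ((1+α)/2)) :
    (∫ ω, p₁ ω * p₂ ω ∂μ) - (∫ ω, p₁ ω * p₂' ω ∂μ)
      + (∫ ω, p₁' ω * p₂ ω ∂μ) + (∫ ω, p₁' ω * p₂' ω ∂μ)
      - (∫ ω, p₁' ω ∂μ) - (∫ ω, p₂ ω ∂μ)
      + (1 - α^2)/2 ≤ 0 := by
  have h := clauser_horne_integral hm₁.aemeasurable hm₁'.aemeasurable hm₂.aemeasurable
    hm₂'.aemeasurable (ae_of_all μ hp₁) (ae_of_all μ hp₁') (ae_of_all μ hp₂) (ae_of_all μ hp₂')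
  exact (le_of_eq (by ring)).trans h

theorem generalized_CH_hyperon
    {Γ : Type*} [MeasurableSpace Γ] (μ : Measure Γ) [IsProbabilityMeasure μ]
    (α : ℝ) (hα : α ∈ Set.Icc (0:ℝ) 1)
    (p₁ p₁' p₂ p₂' : Γ → ℝ)
    (hm₁ : Measurable p₁) (hm₁' : Measurable p₁')
    (hm₂ : Measurable p₂) (hm₂' : Measurable p₂')
    (hp₁ : ∀ ω, p₁ ω ∈ Set.Icc ((1-α)/2) ((1+α)/2))
    (hp₁' : ∀ ω, p₁' ω ∈ Set.Icc ((1-α)/2) ((1+α)/2))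
    (hp₂ : ∀ ω, p₂ ω ∈ Set.Icc ((1-α)/2) ((1+α)/2))
    (hp₂' : ∀ ω, p₂' ω ∈ Set.Icc ((1-α)/2) ((1+α)/2)) :
    (∫ ω, p₁ ω * p₂ ω ∂μ) - (∫ ω, p₁ ω * p₂' ω ∂μ)
      + (∫ ω, p₁' ω * p₂ ω ∂μ) + (∫ ω, p₁' ω * p₂' ω ∂μ)
      - (∫ ω, p₁' ω ∂μ) - (∫ ω, p₂ ω ∂μ)
      + (1 - α^2)/2 ≤ 0 :=
  generalized_CH_hyperon_general μ α p₁ p₁' p₂ p₂' hm₁ hm₁' hm₂ hm₂' hp₁ hp₁' hp₂ hp₂'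
end

section
/- For all real θ, (3·cos θ - cos(3θ))/4 ≤ √2/2, with equality when θ = π/4. -/
open Real

lemma three_mul_cos_sub_cos_three_mul_div_four (θ : ℝ) :
    (3 * cos θ - cos (3 * θ)) / 4 = (3 * cos θ - 2 * cos θ ^ 3) / 2 := by
  rw [cos_three_mul]
  ring

-- The cubic touches `√2` at its double root `x = √2/2`, the maximiser `θ = π/4`.
lemma three_mul_sub_two_mul_pow_three_le_sqrt_two {x : ℝ} (hx : -√2 ≤ x) :
    3 * x - 2 * x ^ 3 ≤ √2 := by
  have hsq : √2 ^ 2 = 2 := sq_sqrt zero_le_two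
  have hfactor : √2 - (3 * x - 2 * x ^ 3) = 2 * (x - √2 / 2) ^ 2 * (x + √2) := by
    linear_combination (3 / 2 * x - √2 / 2) * hsq
  have : 0 ≤ 2 * (x - √2 / 2) ^ 2 * (x + √2) := by
    have : 0 ≤ x + √2 := by linarith
    positivity
  linarith

lemma three_mul_sub_two_mul_pow_three_sqrt_two_div_two :
    3 * (√2 / 2) - 2 * (√2 / 2) ^ 3 = √2 := by
  have hsq : √2 ^ 2 = 2 := sq_sqrt zero_le_two
  linear_combination (-(√2 / 4)) * hsq

theorem CH_trig_bound :
    (∀ θ : ℝ, (3 * cos θ - cos (3*θ))/4 ≤ Real.sqrt 2 / 2) ∧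
    (3 * cos (π/4) - cos (3*(π/4)))/4 = Real.sqrt 2 / 2 := by
  refine ⟨fun θ => ?_, ?_⟩
  · have hcos : -√2 ≤ cos θ :=
      (neg_le_neg one_lt_sqrt_two.le).trans (neg_one_le_cos θ)
    rw [three_mul_cos_sub_cos_three_mul_div_four]
    linarith [three_mul_sub_two_mul_pow_three_le_sqrt_two hcos]
  · rw [three_mul_cos_sub_cos_three_mul_div_four, cos_pi_div_four,
      three_mul_sub_two_mul_pow_three_sqrt_two_div_two]
end

section
/- For any α ∈ ℝ with 0 < α ≤ 1 and any β ∈ (2−√2, 1], there exist unit vectors n₁, n₁', n₂, n₂' in ℝ³ such that Q(n₁,n₂) − Q(n₁,n₂') + Q(n₁',n₂) + Q(n₁',n₂') − 1/2 − 1/2 + (1−α²)/2 > (1−β)·α²/2, where Q(u,v) = (1 + α²⟨u,v⟩)/4. -/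
/-! The left-hand side equals `α² (S - 2) / 4`, where `S` is the CHSH correlation sum of the four
directions. Tsirelson's configuration gives `S = 2√2`, and `α² (2√2 - 2) / 4 > (1 - β) α² / 2`
exactly when `β > 2 - √2`. -/

open RealInnerProductSpace

section CHSH

variable {E : Type*} [NormedAddCommGroup E] [InnerProductSpace ℝ E]

def chsh (a a' b b' : E) : ℝ := ⟪a, b⟫ - ⟪a, b'⟫ + ⟪a', b⟫ + ⟪a', b'⟫

lemma ch_combination_eq_chsh (α : ℝ) (a a' b b' : E) :
    (1 + α^2 * ⟪a, b⟫)/4 - (1 + α^2 * ⟪a, b'⟫)/4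
      + (1 + α^2 * ⟪a', b⟫)/4 + (1 + α^2 * ⟪a', b'⟫)/4
      - 1/2 - 1/2 + (1 - α^2)/2 = α^2 * (chsh a a' b b' - 2) / 4 := by
  unfold chsh
  ring

lemma norm_smul_sqrt_two_div_two {x : E} (hx : ‖x‖ = √2) : ‖(√2 / 2) • x‖ = 1 := by
  rw [norm_smul, hx, Real.norm_of_nonneg (by positivity)]
  field_simp
  exact Real.sq_sqrt zero_le_two

/-- The directions `e₁, b, e₂, b'` are at angles `0, π/4, π/2, 3π/4` in the plane of `e₁, e₂`. -/
theorem exists_chsh_eq_two_mul_sqrt_two {e₁ e₂ : E} (h₁ : ‖e₁‖ = 1) (h₂ : ‖e₂‖ = 1)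
    (h₁₂ : ⟪e₁, e₂⟫ = 0) :
    ∃ b b' : E, ‖b‖ = 1 ∧ ‖b'‖ = 1 ∧ chsh e₁ e₂ b b' = 2 * √2 := by
  have h₂₁ : ⟪e₂, e₁⟫ = 0 := by rw [real_inner_comm, h₁₂]
  refine ⟨(√2 / 2) • (e₁ + e₂), (√2 / 2) • (e₂ - e₁), ?_, ?_, ?_⟩
  · refine norm_smul_sqrt_two_div_two ?_
    rw [← Real.sqrt_sq (norm_nonneg _), norm_add_sq_real, h₁, h₂, h₁₂]
    norm_num
  · refine norm_smul_sqrt_two_div_two ?_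
    rw [← Real.sqrt_sq (norm_nonneg _), norm_sub_sq_real, h₁, h₂, h₂₁]
    norm_num
  · simp only [chsh, inner_smul_right, inner_add_right, inner_sub_right,
      real_inner_self_eq_norm_sq, h₁, h₂, h₁₂, h₂₁]
    ring

end CHSH

theorem quantum_violation_observable_general (α β : ℝ) (hα : 0 < α)
    (hβ : 2 - Real.sqrt 2 < β) :
    ∃ n₁ n₁' n₂ n₂' : EuclideanSpace ℝ (Fin 3),
      ‖n₁‖ = 1 ∧ ‖n₁'‖ = 1 ∧ ‖n₂‖ = 1 ∧ ‖n₂'‖ = 1 ∧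
      (1 + α^2 * ⟪n₁, n₂⟫)/4 - (1 + α^2 * ⟪n₁, n₂'⟫)/4
        + (1 + α^2 * ⟪n₁', n₂⟫)/4 + (1 + α^2 * ⟪n₁', n₂'⟫)/4
        - 1/2 - 1/2 + (1 - α^2)/2 > (1 - β) * α^2 / 2 := by
  have hon := EuclideanSpace.orthonormal_single (𝕜 := ℝ) (ι := Fin 3)
  obtain ⟨b, b', hb, hb', hchsh⟩ :=
    exists_chsh_eq_two_mul_sqrt_two (hon.1 0) (hon.1 1) (hon.2 (show (0 : Fin 3) ≠ 1 by decide))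
  refine ⟨_, _, b, b', hon.1 0, hon.1 1, hb, hb', ?_⟩
  rw [ch_combination_eq_chsh, hchsh, gt_iff_lt, ← sub_pos]
  have hα2 : 0 < α ^ 2 := by positivity
  have hβ' : 0 < √2 - 2 + β := by linarith
  nlinarith [mul_pos hα2 hβ']

theorem quantum_violation_observable (α β : ℝ) (hα : 0 < α) (hα1 : α ≤ 1)
    (hβ : 2 - Real.sqrt 2 < β) (hβ1 : β ≤ 1) :
    ∃ n₁ n₁' n₂ n₂' : EuclideanSpace ℝ (Fin 3),
      ‖n₁‖ = 1 ∧ ‖n₁'‖ = 1 ∧ ‖n₂‖ = 1 ∧ ‖n₂'‖ = 1 ∧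
      (1 + α^2 * ⟪n₁, n₂⟫)/4 - (1 + α^2 * ⟪n₁, n₂'⟫)/4
        + (1 + α^2 * ⟪n₁', n₂⟫)/4 + (1 + α^2 * ⟪n₁', n₂'⟫)/4
        - 1/2 - 1/2 + (1 - α^2)/2 > (1 - β) * α^2 / 2 :=
  quantum_violation_observable_general α β hα hβ
end
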